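/- Let |ψ⁻⟩ = (|01⟩ − |10⟩)/√2 be the singlet state and |φ⟩ = |+⟩⊗|0⟩. Then there exist permutations π and π' of the four outcomes such that the σ_x⊗σ_x outcome distribution of |φ⟩⟨φ| is the π-permutation of that of |ψ⁻⟩⟨ψ⁻| (both are rearrangements of (0, 1/2, 1/2, 0)) and the σ_z⊗σ_z outcome distribution of |φ⟩⟨φ| is the π'-permutation of that of |ψ⁻⟩⟨ψ⁻|. In particular, the entangled singlet state is possibly separable with respect to local measurements σ_x⊗σ_x and σ_z⊗σ_z. -/

import Mathlib

open Matrix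
open scoped BigOperators ComplexOrder

noncomputable section

/-- Tensor (Kronecker) product of two vectors in ℂ², giving a vector in ℂ⁴,
in the ordering |00⟩,|01⟩,|10⟩,|11⟩. -/
def tens (u v : Fin 2 → ℂ) : Fin 4 → ℂ :=
  ![u 0 * v 0, u 0 * v 1, u 1 * v 0, u 1 * v 1]

/-- The rank-one projector |ψ⟩⟨ψ|. -/
def proj (ψ : Fin 4 → ℂ) : Matrix (Fin 4) (Fin 4) ℂ :=
  vecMulVec ψ (star ψ)

/-- A two-qubit state: a positive semidefinite 4×4 complex matrix with trace 1. -/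
def IsState (ρ : Matrix (Fin 4) (Fin 4) ℂ) : Prop :=
  ρ.PosSemidef ∧ ρ.trace = 1

/-- A separable two-qubit state: a finite convex combination of projectors onto
product vectors |a⟩⊗|b⟩ with |a⟩,|b⟩ unit vectors. -/
def IsSepState (ρ : Matrix (Fin 4) (Fin 4) ℂ) : Prop :=
  ∃ (n : ℕ) (w : Fin n → ℝ) (a b : Fin n → Fin 2 → ℂ),
    (∀ i, 0 ≤ w i) ∧ (∑ i, w i = 1) ∧
    (∀ i, star (a i) ⬝ᵥ a i = 1) ∧ (∀ i, star (b i) ⬝ᵥ b i = 1) ∧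
    ρ = ∑ i, (w i : ℂ) • proj (tens (a i) (b i))

/-- First-qubit index of a two-qubit basis index. -/
def q1 : Fin 4 → Fin 2 := ![0, 0, 1, 1]
/-- Second-qubit index of a two-qubit basis index. -/
def q2 : Fin 4 → Fin 2 := ![0, 1, 0, 1]

/-- Single-qubit σ_z eigenbasis |0⟩,|1⟩. -/
def zb : Fin 2 → Fin 2 → ℂ := ![![1, 0], ![0, 1]]

/-- Single-qubit σ_x eigenbasis |+⟩,|−⟩. -/
def xb : Fin 2 → Fin 2 → ℂ :=
  ![![((1 / Real.sqrt 2 : ℝ) : ℂ), ((1 / Real.sqrt 2 : ℝ) : ℂ)],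
    ![((1 / Real.sqrt 2 : ℝ) : ℂ), -((1 / Real.sqrt 2 : ℝ) : ℂ)]]

/-- Single-qubit σ_y eigenbasis |y⁺⟩,|y⁻⟩. -/
def yb : Fin 2 → Fin 2 → ℂ :=
  ![![((1 / Real.sqrt 2 : ℝ) : ℂ), Complex.I * ((1 / Real.sqrt 2 : ℝ) : ℂ)],
    ![((1 / Real.sqrt 2 : ℝ) : ℂ), -(Complex.I * ((1 / Real.sqrt 2 : ℝ) : ℂ))]]

/-- The expectation value ⟨ψ|ρ|ψ⟩ (its real part). -/
def exval (ρ : Matrix (Fin 4) (Fin 4) ℂ) (ψ : Fin 4 → ℂ) : ℝ :=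
  (star ψ ⬝ᵥ ρ.mulVec ψ).re

/-- Outcome distribution of the local measurement σ_z⊗σ_z on ρ. -/
def zDist (ρ : Matrix (Fin 4) (Fin 4) ℂ) : Fin 4 → ℝ :=
  fun i => exval ρ (tens (zb (q1 i)) (zb (q2 i)))

/-- Outcome distribution of the local measurement σ_x⊗σ_x on ρ. -/
def xDist (ρ : Matrix (Fin 4) (Fin 4) ℂ) : Fin 4 → ℝ :=
  fun i => exval ρ (tens (xb (q1 i)) (xb (q2 i)))

/-- Outcome distribution of the local measurement σ_y⊗σ_y on ρ. -/
def yDist (ρ : Matrix (Fin 4) (Fin 4) ℂ) : Fin 4 → ℝ :=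
  fun i => exval ρ (tens (yb (q1 i)) (yb (q2 i)))

/-- Tsallis-q entropy of a probability vector. -/
def tsallis (q : ℝ) (p : Fin 4 → ℝ) : ℝ :=
  (1 - ∑ j, p j ^ q) / (q - 1)

/-- Tsallis-q entropy of the σ_z⊗σ_z outcome distribution. -/
def Szz (q : ℝ) (ρ : Matrix (Fin 4) (Fin 4) ℂ) : ℝ := tsallis q (zDist ρ)

/-- Tsallis-q entropy of the σ_x⊗σ_x outcome distribution. -/
def Sxx (q : ℝ) (ρ : Matrix (Fin 4) (Fin 4) ℂ) : ℝ := tsallis q (xDist ρ)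

/-- The family of states |ψ_t⟩ = (t|00⟩+|01⟩+|10⟩+|11⟩)/√(3+t²). -/
def psi (t : ℝ) : Fin 4 → ℂ :=
  fun i => ![(t : ℂ), 1, 1, 1] i / ((Real.sqrt (3 + t ^ 2) : ℝ) : ℂ)

/-- ρ is possibly separable w.r.t. local measurements σ_x⊗σ_x and σ_z⊗σ_z:
some separable state σ realizes the same scrambled data. -/
def PossiblySeparable (ρ : Matrix (Fin 4) (Fin 4) ℂ) : Prop :=
  ∃ σ, IsState σ ∧ IsSepState σ ∧
    ∃ π π' : Equiv.Perm (Fin 4),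
      (∀ i, xDist σ i = xDist ρ (π i)) ∧ (∀ i, zDist σ i = zDist ρ (π' i))

end

/-- The singlet state |ψ⁻⟩ = (|01⟩ − |10⟩)/√2 (equivalently (|+−⟩−|−+⟩)/√2). -/
noncomputable def singlet : Fin 4 → ℂ := fun i => ![0, 1, -1, 0] i / ((Real.sqrt 2 : ℝ) : ℂ)

/-- The product state |φ⟩ = |+⟩⊗|0⟩. -/
noncomputable def phiProd : Fin 4 → ℂ := tens (xb 0) (zb 0)

lemma exval_proj (ψ φ : Fin 4 → ℂ) :
    exval (proj ψ) φ = Complex.normSq (star φ ⬝ᵥ ψ) := by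
  unfold exval proj
  have h1 : (vecMulVec ψ (star ψ)).mulVec φ = (star ψ ⬝ᵥ φ) • ψ := by
    ext i
    simp [vecMulVec, mulVec, dotProduct, Matrix.of_apply, Finset.mul_sum, mul_comm, mul_left_comm]
  rw [h1, dotProduct_smul]
  have h : star φ ⬝ᵥ ψ = starRingEnd ℂ (star ψ ⬝ᵥ φ) := by
    simp [dotProduct, Finset.sum_comm, mul_comm, Pi.star_apply, map_sum]
  rw [h, smul_eq_mul, Complex.mul_conj, Complex.normSq_conj]
  simp

lemma hs2 : (Real.sqrt 2) * Real.sqrt 2 = 2 := Real.mul_self_sqrt (by norm_num)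

lemma xDist_singlet : xDist (proj singlet) = ![0, 1/2, 1/2, 0] := by
  funext i
  fin_cases i <;>
  · simp only [xDist, exval_proj, dotProduct, Fin.sum_univ_four]
    simp only [singlet, tens, xb, zb, q1, q2, Pi.star_apply, Matrix.cons_val_zero,
      Matrix.cons_val_one, Matrix.head_cons, Matrix.cons_val_two, Matrix.tail_cons,
      Matrix.cons_val_three, Fin.isValue, star_mul', Complex.star_def, Complex.conj_ofReal,
      map_neg]
    simp only [zero_div, mul_zero, zero_mul, add_zero, zero_add, mul_one, one_mul,
      ← Complex.ofReal_one, ← Complex.ofReal_neg, ← Complex.ofReal_mul, ← Complex.ofReal_div,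
      ← Complex.ofReal_add, Complex.normSq_ofReal]
    try field_simp
    try norm_num [hs2]
    try simp only [← Complex.ofReal_inv, ← Complex.ofReal_mul, ← Complex.ofReal_neg,
      ← Complex.ofReal_add, Complex.normSq_ofReal]
    try field_simp
    try (rw [show Real.sqrt 2 ^ 6 = (Real.sqrt 2 ^ 2) ^ 3 by ring, Real.sq_sqrt (by norm_num)]; norm_num)

lemma zDist_singlet : zDist (proj singlet) = ![0, 1/2, 1/2, 0] := by
  funext i
  fin_cases i <;>
  · simp only [zDist, exval_proj, dotProduct, Fin.sum_univ_four]
    simp only [singlet, tens, xb, zb, q1, q2, Pi.star_apply, Matrix.cons_val_zero,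
      Matrix.cons_val_one, Matrix.head_cons, Matrix.cons_val_two, Matrix.tail_cons,
      Matrix.cons_val_three, Fin.isValue, star_mul', Complex.star_def, Complex.conj_ofReal,
      map_neg, _root_.map_one, _root_.map_zero]
    simp only [zero_div, mul_zero, zero_mul, add_zero, zero_add, mul_one, one_mul,
      ← Complex.ofReal_one, ← Complex.ofReal_neg, ← Complex.ofReal_mul, ← Complex.ofReal_div,
      ← Complex.ofReal_add, Complex.normSq_ofReal]
    try field_simp
    try norm_num [hs2]

lemma xDist_phi : xDist (proj phiProd) = ![1/2, 1/2, 0, 0] := by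
  funext i
  fin_cases i <;>
  · simp only [xDist, exval_proj, dotProduct, Fin.sum_univ_four]
    simp only [phiProd, tens, xb, zb, q1, q2, Pi.star_apply, Matrix.cons_val_zero,
      Matrix.cons_val_one, Matrix.head_cons, Matrix.cons_val_two, Matrix.tail_cons,
      Matrix.cons_val_three, Fin.isValue, star_mul', Complex.star_def, Complex.conj_ofReal,
      map_neg, _root_.map_one, _root_.map_zero]
    simp only [zero_div, mul_zero, zero_mul, add_zero, zero_add, mul_one, one_mul,
      neg_mul, mul_neg, neg_neg,
      ← Complex.ofReal_one, ← Complex.ofReal_neg, ← Complex.ofReal_mul, ← Complex.ofReal_div,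
      ← Complex.ofReal_add, Complex.normSq_ofReal]
    try field_simp
    try norm_num [hs2]
    try nlinarith [hs2, Real.sqrt_nonneg 2]
    try simp only [← Complex.ofReal_inv, ← Complex.ofReal_mul, ← Complex.ofReal_neg,
      ← Complex.ofReal_add, Complex.normSq_ofReal]
    try field_simp
    try nlinarith [hs2]

lemma zDist_phi : zDist (proj phiProd) = ![1/2, 0, 1/2, 0] := by
  funext i
  fin_cases i <;>
  · simp only [zDist, exval_proj, dotProduct, Fin.sum_univ_four]
    simp only [phiProd, tens, xb, zb, q1, q2, Pi.star_apply, Matrix.cons_val_zero,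
      Matrix.cons_val_one, Matrix.head_cons, Matrix.cons_val_two, Matrix.tail_cons,
      Matrix.cons_val_three, Fin.isValue, star_mul', Complex.star_def, Complex.conj_ofReal,
      map_neg, _root_.map_one, _root_.map_zero]
    simp only [zero_div, mul_zero, zero_mul, add_zero, zero_add, mul_one, one_mul,
      neg_mul, mul_neg, neg_neg,
      ← Complex.ofReal_one, ← Complex.ofReal_neg, ← Complex.ofReal_mul, ← Complex.ofReal_div,
      ← Complex.ofReal_add, Complex.normSq_ofReal]
    try field_simp
    try norm_num [hs2]
    try nlinarith [hs2, Real.sqrt_nonneg 2]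

lemma proj_posSemidef (ψ : Fin 4 → ℂ) : (proj ψ).PosSemidef := by
  exact posSemidef_vecMulVec_self_star ψ

lemma phi_norm : star (xb 0) ⬝ᵥ xb 0 = 1 := by
  simp only [dotProduct, Fin.sum_univ_two, xb, Pi.star_apply, Matrix.cons_val_zero,
    Matrix.cons_val_one, Matrix.head_cons, Complex.star_def, Complex.conj_ofReal,
    ← Complex.ofReal_mul, ← Complex.ofReal_add]
  norm_num
  rw [← mul_inv]
  norm_cast
  rw [hs2]
  norm_num

lemma zb_norm : star (zb 0) ⬝ᵥ zb 0 = 1 := by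
  simp [dotProduct, Fin.sum_univ_two, zb]

lemma trace_phi : (proj phiProd).trace = 1 := by
  simp only [proj, trace, diag, vecMulVec, Matrix.of_apply, Fin.sum_univ_four, Pi.star_apply,
    phiProd, tens, xb, zb, Matrix.cons_val_zero, Matrix.cons_val_one, Matrix.head_cons,
    Matrix.cons_val_two, Matrix.tail_cons, Matrix.cons_val_three, Complex.star_def,
    Complex.conj_ofReal, mul_one, mul_zero, zero_mul, add_zero,
    ← Complex.ofReal_mul, ← Complex.ofReal_add]
  norm_num
  rw [← mul_inv]
  norm_cast
  rw [hs2]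
  norm_num

/-- The product state |φ⟩ = |+⟩⊗|0⟩ realizes, up to permutations, the
same σ_x⊗σ_x and σ_z⊗σ_z outcome distributions as the singlet |ψ⁻⟩ (all four
distributions are rearrangements of (0, 1/2, 1/2, 0)); hence the entangled singlet is
possibly separable w.r.t. local measurements σ_x⊗σ_x and σ_z⊗σ_z. -/
theorem stmt13 :
    (∃ π : Equiv.Perm (Fin 4),
      ∀ i, xDist (proj phiProd) i = xDist (proj singlet) (π i)) ∧
    (∃ π' : Equiv.Perm (Fin 4),
      ∀ i, zDist (proj phiProd) i = zDist (proj singlet) (π' i)) ∧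
    (∃ τ : Equiv.Perm (Fin 4),
      ∀ i, xDist (proj singlet) i = ![(0 : ℝ), 1 / 2, 1 / 2, 0] (τ i)) ∧
    (∃ τ' : Equiv.Perm (Fin 4),
      ∀ i, zDist (proj singlet) i = ![(0 : ℝ), 1 / 2, 1 / 2, 0] (τ' i)) ∧
    PossiblySeparable (proj singlet) := by
  have hπ : ∀ i, xDist (proj phiProd) i = xDist (proj singlet) ((Equiv.mk ![1,2,0,3] ![2,0,1,3]
      (by decide) (by decide) : Equiv.Perm (Fin 4)) i) := by
    intro i
    rw [xDist_singlet, xDist_phi]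
    fin_cases i <;> norm_num <;> simp
  have hπ' : ∀ i, zDist (proj phiProd) i = zDist (proj singlet) ((Equiv.swap 0 1 :
      Equiv.Perm (Fin 4)) i) := by
    intro i
    rw [zDist_singlet, zDist_phi]
    fin_cases i <;> simp [Equiv.swap_apply_def]
  refine ⟨⟨_, hπ⟩, ⟨_, hπ'⟩, ⟨Equiv.refl _, ?_⟩, ⟨Equiv.refl _, ?_⟩, ?_⟩
  · intro i; rw [xDist_singlet]; rfl
  · intro i; rw [zDist_singlet]; rfl
  · refine ⟨proj phiProd, ⟨proj_posSemidef _, trace_phi⟩, ?_, _, _, hπ, hπ'⟩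
    exact ⟨1, fun _ => 1, fun _ => xb 0, fun _ => zb 0, fun _ => zero_le_one,
      by simp, fun _ => phi_norm, fun _ => zb_norm,
      by simp [Fin.sum_univ_one, phiProd]⟩
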